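/- Let (x, y) be an ε-well-supported NE of the generalized matching-pennies game (I_m, −I_m) with ε ≤ 1/m. Then ‖x − u_m‖_∞ ≤ ε, i.e., no coordinate of x deviates from 1/m by more than ε. -/

import Mathlib

open Finset

def InSimplex {m : ℕ} (x : Fin m → ℝ) : Prop :=
  (∀ i, 0 ≤ x i) ∧ ∑ i, x i = 1

def IsWNE {m : ℕ} (R C : Matrix (Fin m) (Fin m) ℝ) (ε : ℝ)
    (x y : Fin m → ℝ) : Prop :=
  (∀ i, 0 < x i → ∀ k, (∑ j, R k j * y j) - ε ≤ ∑ j, R i j * y j) ∧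
  (∀ j, 0 < y j → ∀ k, (∑ i, x i * C i k) - ε ≤ ∑ i, x i * C i j)

/-!
If the row player puts weight on a strategy `k` that the column player ignores, every
strategy of the column player is an `ε`-best response, so `y ≤ ε` off `k` and
`1 = ∑ y ≤ (m - 1) ε < 1`. Hence the row player's support lies in the column player's, and
the column player's `ε`-best-response condition says that every strategy in it carries
at most `ε` more weight than any other. Comparing a supported strategy with one of weight
at most `1/m`, and one of weight at least `1/m` with `i`, gives `|x i - 1/m| ≤ ε`.
-/

section

variable {m : ℕ} {x y : Fin m → ℝ} {ε : ℝ}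

theorem isWNE_one_neg_one_iff :
    IsWNE 1 (-1) ε x y ↔
      (∀ i, 0 < x i → ∀ k, y k ≤ y i + ε) ∧ (∀ j, 0 < y j → ∀ k, x j ≤ x k + ε) := by
  simp only [IsWNE, Matrix.one_apply, Matrix.neg_apply, ite_mul, one_mul, zero_mul,
    Finset.sum_ite_eq, Finset.mem_univ, if_true, mul_neg, mul_ite, mul_one, mul_zero,
    Finset.sum_neg_distrib, Finset.sum_ite_eq', sub_le_iff_le_add]
  constructor <;> rintro ⟨hrow, hcol⟩ <;>
    exact ⟨fun i hi k => by linarith [hrow i hi k], fun j hj k => by linarith [hcol j hj k]⟩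

theorem sum_const_inv_card (i : Fin m) : ∑ _j : Fin m, (1 / m : ℝ) = 1 := by
  have : (m : ℝ) ≠ 0 := by exact_mod_cast i.pos.ne'
  simp [this]

theorem InSimplex.exists_le_inv_card (hx : InSimplex x) (i : Fin m) : ∃ j, x j ≤ 1 / m := by
  obtain ⟨j, -, hj⟩ := Finset.exists_le_of_sum_le ⟨i, mem_univ i⟩
    (hx.2.trans (sum_const_inv_card i).symm).le
  exact ⟨j, hj⟩

theorem InSimplex.exists_inv_card_le (hx : InSimplex x) (i : Fin m) : ∃ j, 1 / m ≤ x j := by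
  obtain ⟨j, -, hj⟩ := Finset.exists_le_of_sum_le ⟨i, mem_univ i⟩
    ((sum_const_inv_card i).trans hx.2.symm).le
  exact ⟨j, hj⟩

theorem InSimplex.one_le_mul_of_apply_eq_zero (hx : InSimplex x) {k : Fin m} (hk : x k = 0)
    (hε : ∀ j, x j ≤ ε) : 1 ≤ (m - 1) * ε := by
  have hcard : ((univ.erase k).card : ℝ) = m - 1 := by
    rw [card_erase_of_mem (mem_univ k), card_univ, Fintype.card_fin, Nat.cast_sub k.pos,
      Nat.cast_one]
  calc (1 : ℝ) = ∑ j ∈ univ.erase k, x j := by rw [sum_erase _ hk, hx.2]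
    _ ≤ (univ.erase k).card • ε := sum_le_card_nsmul _ _ _ fun j _ => hε j
    _ = (m - 1) * ε := by rw [nsmul_eq_mul, hcard]

theorem IsWNE.pos_of_pos_one_neg_one (h : IsWNE 1 (-1) ε x y) (hy : InSimplex y)
    (hε : ε ≤ 1 / m) {k : Fin m} (hk : 0 < x k) : 0 < y k := by
  by_contra! hyk
  have hyk : y k = 0 := le_antisymm hyk (hy.1 k)
  have hsmall : ∀ j, y j ≤ ε := fun j => by
    linarith [(isWNE_one_neg_one_iff.mp h).1 k hk j]
  have hm : (1 : ℝ) ≤ m := by exact_mod_cast k.pos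
  have : ((m : ℝ) - 1) * ε ≤ (m - 1) * (1 / m) := mul_le_mul_of_nonneg_left hε (by linarith)
  have : ((m : ℝ) - 1) * (1 / m) < 1 := by
    rw [mul_one_div, div_lt_one (by linarith)]; linarith
  linarith [hy.one_le_mul_of_apply_eq_zero hyk hsmall]

theorem IsWNE.le_add_of_pos_one_neg_one (h : IsWNE 1 (-1) ε x y) (hy : InSimplex y)
    (hε : ε ≤ 1 / m) {k : Fin m} (hk : 0 < x k) (l : Fin m) : x k ≤ x l + ε :=
  (isWNE_one_neg_one_iff.mp h).2 k (h.pos_of_pos_one_neg_one hy hε hk) l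

end

theorem matchingPennies_wne_linf_general {m : ℕ}
    (ε : ℝ) (hε0 : 0 ≤ ε) (hε : ε ≤ 1 / m)
    (x y : Fin m → ℝ) (hx : InSimplex x) (hy : InSimplex y)
    (h : IsWNE (1 : Matrix (Fin m) (Fin m) ℝ) (-(1 : Matrix (Fin m) (Fin m) ℝ)) ε x y) :
    ∀ i, |x i - 1 / m| ≤ ε := by
  intro i
  obtain ⟨j, hj⟩ := hx.exists_le_inv_card i
  obtain ⟨k, hk⟩ := hx.exists_inv_card_le i
  have hm : (0 : ℝ) < 1 / m := by have := i.pos; positivity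
  rw [abs_le]
  constructor
  · linarith [h.le_add_of_pos_one_neg_one hy hε (hm.trans_le hk) i]
  · rcases le_or_gt (x i) 0 with hi | hi
    · linarith
    · linarith [h.le_add_of_pos_one_neg_one hy hε hi j]

/-- in every ε-WNE of generalized matching pennies (I_m, −I_m)
with ε ≤ 1/m, the row player's strategy is within ε of uniform in ℓ∞. -/
theorem matchingPennies_wne_linf {m : ℕ} (hm : 0 < m)
    (ε : ℝ) (hε0 : 0 ≤ ε) (hε : ε ≤ 1 / m)
    (x y : Fin m → ℝ) (hx : InSimplex x) (hy : InSimplex y)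
    (h : IsWNE (1 : Matrix (Fin m) (Fin m) ℝ) (-(1 : Matrix (Fin m) (Fin m) ℝ)) ε x y) :
    ∀ i, |x i - 1 / m| ≤ ε :=
  matchingPennies_wne_linf_general ε hε0 hε x y hx hy h
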